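/- (Order constraint in the worst-case construction of Figure 2, underlying Lemma 4/Theorem 3 of the paper.) Let v_1, …, v_n be a bijective enumeration of the vertices of G_n with v_1 = u_1, and suppose Dijkstra's label recursion processed in this order is correct, i.e. D_j(v_j) = d(v_j) for every j. Then for every j ≥ 2, if v_j = u_k with k ≥ 3, there exists an earlier index j' with 2 ≤ j' < j such that v_{j'} = u_m for some m with 2 ≤ m < k; in particular v_2 = u_2. -/

import Mathlib

/-!
For `k ≥ 3` the two-edge path `u_1 → u_2 → u_k` gives `d(u_k) ≤ c_2 < c_k`. On the other hand,
as long as no `u_m` with `2 ≤ m < k` has been extracted, every extracted vertex is either the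
source, whose edge to `u_k` costs `c_k`, or some `u_m` with `m ≥ k`, which has no edge into `u_k`;
so the label of `u_k` is still at least `c_k`. Correctness at `u_k` therefore forces such a `u_m`
to be extracted first. Since `v_2 ≠ u_1`, applying this to `v_2` leaves only `v_2 = u_2`.
-/

open scoped ENNReal

/-- The length of the path `p 0, p 1, …, p k` in a graph on `Fin n` with
edge-weight function `w` (where `w u v = ∞` encodes the absence of an edge). -/
noncomputable def pathCost {n : ℕ} (w : Fin n → Fin n → ℝ≥0∞) (p : ℕ → Fin n) (k : ℕ) : ℝ≥0∞ :=
  ∑ i ∈ Finset.range k, w (p i) (p (i + 1))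

/-- The shortest-path distance from `s` to `v`: the infimum over all finite paths
from `s` to `v` of their lengths. -/
noncomputable def spDist {n : ℕ} (w : Fin n → Fin n → ℝ≥0∞) (s v : Fin n) : ℝ≥0∞ :=
  ⨅ (k : ℕ) (p : ℕ → Fin n) (_ : p 0 = s) (_ : p k = v), pathCost w p k

/-- Dijkstra's label recursion, processed according to the enumeration `e` (0-indexed):
`dijkstraD w s e 0` is the initial labelling (`0` at `s`, `∞` elsewhere), and step `j`
relaxes all edges out of the extracted vertex `e j`.  The paper's `D_j` is
`dijkstraD w s e (j-1)`; the extraction value of `v_j` is `dijkstraD w s e (j-1) (e (j-1))`. -/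
noncomputable def dijkstraD {n : ℕ} (w : Fin n → Fin n → ℝ≥0∞) (s : Fin n) (e : Fin n → Fin n) :
    ℕ → Fin n → ℝ≥0∞
  | 0 => fun u => if u = s then 0 else ⊤
  | j + 1 => fun u =>
      if h : j < n then
        min (dijkstraD w s e j u) (dijkstraD w s e j (e ⟨j, h⟩) + w (e ⟨j, h⟩) u)
      else dijkstraD w s e j u

/-- The edge-weight function of the worst-case graph `G_n` of Figure 2 (0-indexed:
vertex `u_k` of the paper is index `k - 1`).  From the source (index 0) there is an
edge of weight `c j` to every other vertex `j`; between two non-source vertices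
`i < j` there is a zero-length edge; all other ordered pairs have no edge (`∞`). -/
noncomputable def figW (n : ℕ) (c : Fin n → ℝ) : Fin n → Fin n → ℝ≥0∞ := fun i j =>
  if i.val = 0 ∧ 1 ≤ j.val then ENNReal.ofReal (c j)
  else if 1 ≤ i.val ∧ i.val < j.val then 0
  else ⊤

theorem spDist_le_pathCost {n : ℕ} (w : Fin n → Fin n → ℝ≥0∞) (p : ℕ → Fin n) (k : ℕ) :
    spDist w (p 0) (p k) ≤ pathCost w p k :=
  iInf_le_of_le k <| iInf_le_of_le p <| iInf_le_of_le rfl <| iInf_le _ rfl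

theorem le_dijkstraD_succ {n : ℕ} {w : Fin n → Fin n → ℝ≥0∞} {s : Fin n} {e : Fin n → Fin n}
    {j : ℕ} {u : Fin n} {a : ℝ≥0∞} (hu : a ≤ dijkstraD w s e j u)
    (hrelax : ∀ h : j < n, a ≤ dijkstraD w s e j (e ⟨j, h⟩) + w (e ⟨j, h⟩) u) :
    a ≤ dijkstraD w s e (j + 1) u := by
  by_cases h : j < n
  · simpa only [dijkstraD, dif_pos h] using le_min hu (hrelax h)
  · simpa only [dijkstraD, dif_neg h] using hu

section figW

variable {n : ℕ} {c : Fin n → ℝ}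

theorem spDist_figW_le (v : Fin n) (hv : 2 ≤ v.val) :
    spDist (figW n c) ⟨0, v.pos⟩ v ≤ ENNReal.ofReal (c ⟨1, by omega⟩) := by
  let p : ℕ → Fin n := fun i => if i = 0 then ⟨0, v.pos⟩ else if i = 1 then ⟨1, by omega⟩ else v
  calc spDist (figW n c) ⟨0, v.pos⟩ v = spDist (figW n c) (p 0) (p 2) := rfl
    _ ≤ pathCost (figW n c) p 2 := spDist_le_pathCost _ p 2
    _ = ENNReal.ofReal (c ⟨1, by omega⟩) := by
      have h1v : (⟨1, by omega⟩ : Fin n) < v := hv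
      simp [pathCost, Finset.sum_range_succ, p, figW, h1v]

theorem ofReal_le_figW (i u : Fin n) (hu : 1 ≤ u.val) (hi : i.val = 0 ∨ u.val ≤ i.val) :
    ENNReal.ofReal (c u) ≤ figW n c i u := by
  rcases hi with hi | hi
  · simp [figW, hi, hu]
  · simp [figW, show i.val ≠ 0 by omega, show ¬ i.val < u.val by omega]

theorem ofReal_le_dijkstraD_figW (e : Fin n → Fin n) (u : Fin n) (hu : 1 ≤ u.val) (j : ℕ)
    (hearlier : ∀ i : Fin n, i.val < j → (e i).val = 0 ∨ u.val ≤ (e i).val) :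
    ENNReal.ofReal (c u) ≤ dijkstraD (figW n c) ⟨0, u.pos⟩ e j u := by
  induction j with
  | zero => simp [dijkstraD, Fin.ext_iff, show u.val ≠ 0 by omega]
  | succ j ih =>
    refine le_dijkstraD_succ (ih fun i hi => hearlier i (by omega)) fun h => ?_
    exact (ofReal_le_figW _ u hu (hearlier ⟨j, h⟩ (by simp))).trans le_add_self

theorem exists_earlier_of_dijkstraD_figW_eq_spDist (hn : 1 < n) (hc1 : 0 < c ⟨1, hn⟩)
    (hmono : ∀ i j : Fin n, 1 ≤ i.val → i < j → c i < c j)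
    {e : Fin n → Fin n} (hes : e ⟨0, by omega⟩ = ⟨0, by omega⟩) (j : Fin n) (hej : 2 ≤ (e j).val)
    (hcorrect : dijkstraD (figW n c) ⟨0, by omega⟩ e j.val (e j) =
      spDist (figW n c) ⟨0, by omega⟩ (e j)) :
    ∃ j' : Fin n, 1 ≤ j'.val ∧ j' < j ∧ 1 ≤ (e j').val ∧ (e j').val < (e j).val := by
  by_contra! hnone
  have hlower : ENNReal.ofReal (c (e j)) ≤ spDist (figW n c) ⟨0, by omega⟩ (e j) := by
    refine (ofReal_le_dijkstraD_figW e (e j) (by omega) j.val fun i hi => ?_).trans_eq hcorrect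
    refine (Nat.eq_zero_or_pos (e i).val).imp id fun hei => hnone i ?_ hi hei
    refine Nat.one_le_iff_ne_zero.2 fun hi0 => ?_
    rw [show i = ⟨0, by omega⟩ from Fin.ext hi0, hes] at hei
    exact lt_irrefl 0 hei
  have hc : c ⟨1, hn⟩ < c (e j) := hmono _ _ le_rfl hej
  exact (hlower.trans (spDist_figW_le (e j) hej)).not_gt
    ((ENNReal.ofReal_lt_ofReal_iff (hc1.trans hc)).2 hc)

end figW

/-- Order constraint in the worst-case construction of Figure 2.  If Dijkstra's label
recursion processed along a bijective enumeration `e` of the vertices of `G_n`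
(starting at the source `u_1`, index 0) is correct, then whenever `v_j = u_k` with
`k ≥ 3` (0-indexed: `(e j).val ≥ 2`) is extracted at a step `j ≥ 2` (0-indexed:
`j.val ≥ 1`), some vertex `u_m` with `2 ≤ m < k` (0-indexed: `1 ≤ (e j').val < (e j).val`)
is extracted at an earlier step `j'` with `2 ≤ j' < j` (0-indexed: `1 ≤ j'.val`);
in particular the second extracted vertex is `u_2` (0-indexed: `e 1 = 1`). -/
theorem figW_order_constraint (n : ℕ) (hn : 3 ≤ n) (c : Fin n → ℝ)
    (hc1 : 0 < c ⟨1, by omega⟩)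
    (hmono : ∀ i j : Fin n, 1 ≤ i.val → i < j → c i < c j)
    (e : Fin n → Fin n) (he : Function.Bijective e) (hes : e ⟨0, by omega⟩ = ⟨0, by omega⟩)
    (hcorrect : ∀ j : Fin n,
      dijkstraD (figW n c) ⟨0, by omega⟩ e j.val (e j) =
        spDist (figW n c) ⟨0, by omega⟩ (e j)) :
    (∀ j : Fin n, 1 ≤ j.val → 2 ≤ (e j).val →
      ∃ j' : Fin n, 1 ≤ j'.val ∧ j' < j ∧ 1 ≤ (e j').val ∧ (e j').val < (e j).val) ∧
    e ⟨1, by omega⟩ = ⟨1, by omega⟩ := by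
  have earlier (j : Fin n) (hej : 2 ≤ (e j).val) :=
    exists_earlier_of_dijkstraD_figW_eq_spDist (by omega) hc1 hmono hes j hej (hcorrect j)
  refine ⟨fun j _ => earlier j, Fin.ext ?_⟩
  have hne : (e ⟨1, by omega⟩).val ≠ 0 := fun h =>
    one_ne_zero (congrArg Fin.val (he.injective (Fin.ext (h.trans (congrArg Fin.val hes).symm))))
  have hlt : (e ⟨1, by omega⟩).val < 2 := by
    by_contra! hge
    obtain ⟨j', hj', hj'1, -⟩ := earlier ⟨1, by omega⟩ hge
    exact (Fin.lt_def.1 hj'1).not_ge hj'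
  show (e ⟨1, by omega⟩).val = 1
  omega
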